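/- Let 0 < p, q < 1, ω ∈ ℝ with ω ≠ 0, and let f : [0,1] × ℝ → ℝ be continuous. Assume hypothesis (H2): there exists a constant B ≤ 0 such that ω²x − f(t,x) ≥ B(1−t)^{1−r} for all t ∈ [0,1], all x with B/Γ(q+1) ≤ x ≤ 0, and all r ∈ [p,1). Define β(t) = B t^q (q+1−t)/Γ(q+2). Then β(0) = 0, and for every r ∈ [p,1) and every t ∈ [0,1], ω² β(t) − B(1−t)^{1−r}/Γ(2−r) − f(t, β(t)) ≥ 0. (Here B(1−t)^{1−r}/Γ(2−r) equals the right Caputo derivative of order r of ψ(t) = B(1−t), which is the left Riemann–Liouville derivative of order q of β, so β is an upper solution of problem (P1).) -/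
import Mathlib


open Real Set

lemma gamma_le_one_aux {x : ℝ} (h1 : 1 ≤ x) (h2 : x ≤ 2) : Real.Gamma x ≤ 1 := by
  have hc := Real.convexOn_Gamma
  have hm1 : (1:ℝ) ∈ Set.Ioi (0:ℝ) := by norm_num
  have hm2 : (2:ℝ) ∈ Set.Ioi (0:ℝ) := by norm_num
  have ha : (0:ℝ) ≤ 2 - x := by linarith
  have hb : (0:ℝ) ≤ x - 1 := by linarith
  have hab : (2 - x) + (x - 1) = 1 := by ring
  have h := hc.2 hm1 hm2 ha hb hab
  have hx : (2 - x) • (1:ℝ) + (x - 1) • (2:ℝ) = x := by simp [smul_eq_mul]; ring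
  rw [hx] at h
  have g2 : Real.Gamma 2 = 1 := by
    rw [show (2:ℝ) = 1 + 1 by norm_num, Real.Gamma_add_one one_ne_zero, Real.Gamma_one]; ring
  simp [smul_eq_mul, Real.Gamma_one, g2] at h
  linarith

/-- Under hypothesis (H2), the function `β(t) = B t^q (q+1-t)/Γ(q+2)` satisfies
`β(0) = 0` and `ω² β(t) − B(1-t)^{1-r}/Γ(2-r) − f(t, β(t)) ≥ 0` for all
`r ∈ [p,1)` and `t ∈ [0,1]`; i.e. `β` is an upper solution of problem (P1). -/
theorem upper_solution (p q : ℝ) (hp : 0 < p) (hp1 : p < 1) (hq : 0 < q) (hq1 : q < 1)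
    (ω : ℝ) (hω : ω ≠ 0) (f : ℝ → ℝ → ℝ)
    (hf : ContinuousOn (fun z : ℝ × ℝ => f z.1 z.2) (Set.Icc (0:ℝ) 1 ×ˢ Set.univ))
    (B : ℝ) (hB : B ≤ 0)
    (H2 : ∀ t ∈ Set.Icc (0:ℝ) 1, ∀ x : ℝ, B / Real.Gamma (q + 1) ≤ x → x ≤ 0 →
      ∀ r ∈ Set.Ico p 1, B * (1 - t) ^ (1 - r) ≤ ω ^ 2 * x - f t x)
    (β : ℝ → ℝ) (hβ : ∀ t, β t = B * t ^ q * (q + 1 - t) / Real.Gamma (q + 2)) :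
    β 0 = 0 ∧
      ∀ r ∈ Set.Ico p 1, ∀ t ∈ Set.Icc (0:ℝ) 1,
        0 ≤ ω ^ 2 * β t - B * (1 - t) ^ (1 - r) / Real.Gamma (2 - r) - f t (β t) := by
  have hΓq1 : 0 < Real.Gamma (q + 1) := Real.Gamma_pos_of_pos (by linarith)
  have hΓq2 : Real.Gamma (q + 2) = (q + 1) * Real.Gamma (q + 1) := by
    rw [show q + 2 = (q + 1) + 1 by ring, Real.Gamma_add_one (by positivity)]
  have hΓq2pos : 0 < Real.Gamma (q + 2) := by rw [hΓq2]; positivity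
  constructor
  · rw [hβ 0, Real.zero_rpow hq.ne']; simp
  · intro r hr t ht
    obtain ⟨ht0, ht1⟩ := ht
    -- bounds on β t
    have htq0 : 0 ≤ t ^ q := Real.rpow_nonneg ht0 q
    have htq1 : t ^ q ≤ 1 := Real.rpow_le_one ht0 ht1 hq.le
    have hβle : β t ≤ 0 := by
      rw [hβ t]
      apply div_nonpos_of_nonpos_of_nonneg _ hΓq2pos.le
      have : B * t ^ q ≤ 0 := mul_nonpos_of_nonpos_of_nonneg hB htq0
      exact mul_nonpos_of_nonpos_of_nonneg this (by linarith)
    have hβge : B / Real.Gamma (q + 1) ≤ β t := by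
      rw [hβ t]
      have hc : t ^ q * (q + 1 - t) / Real.Gamma (q + 2) ≤ 1 / Real.Gamma (q + 1) := by
        rw [hΓq2]
        rw [div_le_div_iff₀ (by positivity) hΓq1]
        have h1 : t ^ q * (q + 1 - t) ≤ 1 * (q + 1) := by
          apply mul_le_mul htq1 (by linarith) (by linarith) (by norm_num)
        nlinarith [hΓq1]
      have : B * (t ^ q * (q + 1 - t) / Real.Gamma (q + 2)) ≥
          B * (1 / Real.Gamma (q + 1)) := mul_le_mul_of_nonpos_left hc hB
      calc B / Real.Gamma (q + 1) = B * (1 / Real.Gamma (q + 1)) := by ring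
        _ ≤ B * (t ^ q * (q + 1 - t) / Real.Gamma (q + 2)) := this
        _ = B * t ^ q * (q + 1 - t) / Real.Gamma (q + 2) := by ring
    have key := H2 t ⟨ht0, ht1⟩ (β t) hβge hβle r hr
    -- Γ(2-r) ∈ (0,1]
    have hr0 : p ≤ r := hr.1
    have hr1 : r < 1 := hr.2
    have hΓ2r_le : Real.Gamma (2 - r) ≤ 1 := gamma_le_one_aux (by linarith) (by linarith)
    have hΓ2r_pos : 0 < Real.Gamma (2 - r) := Real.Gamma_pos_of_pos (by linarith)
    have hBt : B * (1 - t) ^ (1 - r) ≤ 0 :=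
      mul_nonpos_of_nonpos_of_nonneg hB (Real.rpow_nonneg (by linarith) _)
    have hdiv : B * (1 - t) ^ (1 - r) / Real.Gamma (2 - r) ≤ B * (1 - t) ^ (1 - r) := by
      rw [div_le_iff₀ hΓ2r_pos]
      nlinarith
    linarith
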